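/- arXiv:2112.10886 — 8 statements merged into one kernel-verified Lean document; each statement's English description precedes it below -/
import Mathlib

section
/- Let K be a field of characteristic zero or characteristic p with m ≤ p-1, m ≥ 5. No nontrivial solution (x₁,...,x_m) of the system x₁^k + ... + x_m^k = 0 (1 ≤ k ≤ m-2) has four coordinates with pairwise distinct indices i₁,i₂,i₃,i₄ such that x_{i₁} = x_{i₂} and x_{i₃} = x_{i₄}. -/
/-!
By Newton's identities the vanishing of the power sums of degrees `1, …, m - 2` forces the
vanishing of the elementary symmetric functions of the same degrees, so
`∏ i, (X - x i) = X ^ m + c X + d`. The two equal pairs give double roots `u`, `v` of this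
trinomial; eliminating `u ^ m` from `f u = f' u = 0` gives `(m - 1) c u = -m d`, and likewise
for `v`. If `u ≠ v` this forces `c = 0`; if `u = v` then `u` is a root of multiplicity four,
so `f'' u = m (m - 1) u ^ (m - 2) = 0`. Either way `u = 0`, whence `c = d = 0`,
`f = X ^ m` and every `x i` vanishes.
-/

open Polynomial Finset

theorem Finset.esymm_map_val_eq_zero_of_sum_pow_eq_zero {σ R : Type*} [Fintype σ]
    [CommRing R] [NoZeroDivisors R] (x : σ → R) {k : ℕ} (hk : (k : R) ≠ 0)
    (hpsum : ∀ j, 1 ≤ j → j ≤ k → ∑ i, x i ^ j = 0) :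
    (univ.val.map x).esymm k = 0 := by
  -- Newton's identity for `k` only involves the power sums of degree `1, …, k`.
  have newton := congrArg (MvPolynomial.aeval x) (MvPolynomial.mul_esymm_eq_sum σ R k)
  simp only [map_mul, map_sum, map_pow, map_neg, map_one, map_natCast,
    MvPolynomial.aeval_esymm_eq_multiset_esymm, MvPolynomial.psum, MvPolynomial.aeval_X]
    at newton
  rw [Finset.sum_eq_zero fun a ha => ?_, mul_zero] at newton
  · exact (mul_eq_zero.mp newton).resolve_left hk
  · rw [mem_filter, HasAntidiagonal.mem_antidiagonal] at ha
    rw [hpsum a.2 (by omega) (by omega), mul_zero]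

theorem Multiset.exists_prod_X_sub_C_eq_X_pow_add_C_mul_X_add_C {R : Type*} [CommRing R]
    [Nontrivial R] (s : Multiset R) (hs : 2 ≤ s.card)
    (hesymm : ∀ k, 1 ≤ k → k + 2 ≤ s.card → s.esymm k = 0) :
    ∃ c d : R, (s.map fun t => X - C t).prod = X ^ s.card + C c * X + C d := by
  set f := (s.map fun t => X - C t).prod
  refine ⟨f.coeff 1, f.coeff 0, Polynomial.ext fun n => ?_⟩
  rcases n with _ | _ | n
  · simp [coeff_X_pow, show 0 ≠ s.card by omega]
  · simp [coeff_X_pow, show 1 ≠ s.card by omega]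
  have hrhs : (X ^ s.card + C (f.coeff 1) * X + C (f.coeff 0)).coeff (n + 2) =
      if n + 2 = s.card then 1 else 0 := by
    simp [coeff_X_pow]
  rw [hrhs]
  rcases lt_or_ge s.card (n + 2) with hlt | hle
  · rw [coeff_eq_zero_of_natDegree_lt (by rwa [natDegree_multiset_prod_X_sub_C_eq_card]),
      if_neg hlt.ne']
  rw [Multiset.prod_X_sub_C_coeff s hle]
  rcases hle.eq_or_lt with heq | hlt
  · simp [← heq, Multiset.esymm]
  · rw [hesymm _ (by omega) (by omega), mul_zero, if_neg hlt.ne]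

theorem Finset.exists_prod_X_sub_C_eq_X_pow_add_C_mul_X_add_C_of_sum_pow_eq_zero
    {σ R : Type*} [Fintype σ] [CommRing R] [IsDomain R] (x : σ → R) (hcard : 2 ≤ Fintype.card σ)
    (hcast : ∀ k, 1 ≤ k → k + 2 ≤ Fintype.card σ → (k : R) ≠ 0)
    (hpsum : ∀ k, 1 ≤ k → k + 2 ≤ Fintype.card σ → ∑ i, x i ^ k = 0) :
    ∃ c d : R, ∏ i, (X - C (x i)) = X ^ Fintype.card σ + C c * X + C d := by
  have hs : (univ.val.map x).card = Fintype.card σ := by simp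
  have hprod : ∏ i, (X - C (x i)) = ((univ.val.map x).map fun t => X - C t).prod := by
    rw [Multiset.map_map]; rfl
  rw [hprod, ← hs]
  refine Multiset.exists_prod_X_sub_C_eq_X_pow_add_C_mul_X_add_C _ (hs ▸ hcard)
    fun k hk hkm => ?_
  exact Finset.esymm_map_val_eq_zero_of_sum_pow_eq_zero x (hcast k hk (hs ▸ hkm))
    fun j hj hjk => hpsum j hj (by omega)

theorem Polynomial.isRoot_iterate_derivative_of_pow_dvd {R : Type*} [CommRing R] {f : R[X]}
    {u : R} {k n : ℕ} (hn : n < k) (h : (X - C u) ^ k ∣ f) : (derivative^[n] f).IsRoot u :=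
  dvd_iff_isRoot.mp <|
    (dvd_pow_self _ (Nat.sub_ne_zero_of_lt hn)).trans
      (pow_sub_dvd_iterate_derivative_of_pow_dvd n h)

theorem Polynomial.eq_zero_of_sq_mul_sq_dvd_X_pow_add_C_mul_X_add_C {R : Type*} [CommRing R]
    [IsDomain R] {m : ℕ} (hm : 3 ≤ m) (hm0 : (m : R) ≠ 0) (hm1 : ((m - 1 : ℕ) : R) ≠ 0)
    {c d u v : R} (hdvd : (X - C u) ^ 2 * (X - C v) ^ 2 ∣ X ^ m + C c * X + C d) :
    c = 0 ∧ d = 0 := by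
  obtain ⟨n, rfl⟩ : ∃ n, m = n + 3 := ⟨m - 3, by omega⟩
  set f : R[X] := X ^ (n + 3) + C c * X + C d
  have hf' : derivative f = C (n + 3 : R) * X ^ (n + 2) + C c := by
    simp only [f, derivative_add, derivative_X_pow, derivative_C_mul_X, derivative_C, add_zero]
    push_cast
    rfl
  have hf'' : derivative (derivative f) = C ((n + 3) * (n + 2) : R) * X ^ (n + 1) := by
    simp only [hf', derivative_add, derivative_C_mul_X_pow, derivative_C, add_zero]
    push_cast
    rfl
  have h3 : (n + 3 : R) ≠ 0 := by exact_mod_cast hm0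
  have h2 : (n + 2 : R) ≠ 0 := by exact_mod_cast hm1
  have hdouble : ∀ w, (X - C w) ^ 2 ∣ f →
      (n + 3) * w ^ (n + 2) + c = 0 ∧ w ^ (n + 3) + c * w + d = 0 := fun w hw => by
    refine ⟨?_, ?_⟩
    · simpa [hf'] using isRoot_iterate_derivative_of_pow_dvd (n := 1) one_lt_two hw
    · simpa [f] using isRoot_iterate_derivative_of_pow_dvd (n := 0) two_pos hw
  obtain ⟨hu', hu⟩ := hdouble u ((dvd_mul_right _ _).trans hdvd)
  suffices hu0 : u = 0 by
    obtain rfl : c = 0 := by simpa [hu0] using hu'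
    simpa [hu0] using hu
  by_cases huv : u = v
  · subst huv
    rw [← pow_add] at hdvd
    have hroot : (derivative (derivative f)).IsRoot u :=
      isRoot_iterate_derivative_of_pow_dvd (n := 2) (by norm_num) hdvd
    simpa [hf'', h3, h2] using hroot
  · obtain ⟨hv', hv⟩ := hdouble v ((dvd_mul_left _ _).trans hdvd)
    -- `w f'(w) - (n + 3) f(w) = -(n + 2) c w - (n + 3) d` at both double roots
    have hc : (n + 2) * c * (u - v) = 0 := by
      linear_combination (n + 3 : R) * hu - u * hu' - (n + 3 : R) * hv + v * hv'
    obtain rfl : c = 0 := by simpa [h2, sub_eq_zero, huv] using hc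
    simpa [h3] using hu'

/-- No nontrivial solution of the power-sum system of degrees 1..m-2 has four
coordinates with pairwise distinct indices i₁,i₂,i₃,i₄ such that
x_{i₁} = x_{i₂} and x_{i₃} = x_{i₄}. -/
theorem stmt3 {K : Type*} [Field K] (p m : ℕ) (hm : 5 ≤ m)
    (hchar : CharP K 0 ∨ (p.Prime ∧ 0 < p ∧ CharP K p ∧ m ≤ p - 1))
    (x : Fin m → K) (hx : x ≠ 0)
    (hsol : ∀ k : ℕ, 1 ≤ k → k ≤ m - 2 → ∑ i, x i ^ k = 0) :
    ¬ ∃ i₁ i₂ i₃ i₄ : Fin m, i₁ ≠ i₂ ∧ i₁ ≠ i₃ ∧ i₁ ≠ i₄ ∧ i₂ ≠ i₃ ∧ i₂ ≠ i₄ ∧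
      i₃ ≠ i₄ ∧ x i₁ = x i₂ ∧ x i₃ = x i₄ := by
  rintro ⟨i₁, i₂, i₃, i₄, h12, h13, h14, h23, h24, h34, hx12, hx34⟩
  have hcast : ∀ k, 1 ≤ k → k ≤ m → (k : K) ≠ 0 := by
    intro k hk hkm
    rcases hchar with hchar | ⟨-, -, hchar, hmp⟩
    · rw [Ne, CharP.cast_eq_zero_iff K 0, zero_dvd_iff]; omega
    · rw [Ne, CharP.cast_eq_zero_iff K p]
      exact fun h => absurd (Nat.le_of_dvd (by omega) h) (by omega)
  obtain ⟨c, d, hf⟩ := exists_prod_X_sub_C_eq_X_pow_add_C_mul_X_add_C_of_sum_pow_eq_zero x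
    (by rw [Fintype.card_fin]; omega)
    (fun k hk hkm => hcast k hk (by rw [Fintype.card_fin] at hkm; omega))
    (fun k hk hkm => hsol k hk (by rw [Fintype.card_fin] at hkm; omega))
  rw [Fintype.card_fin] at hf
  have hdvd : (X - C (x i₁)) ^ 2 * (X - C (x i₃)) ^ 2 ∣ X ^ m + C c * X + C d := by
    rw [← hf]
    convert Finset.prod_dvd_prod_of_subset {i₁, i₂, i₃, i₄} univ (fun i => X - C (x i))
      (subset_univ _) using 1
    rw [prod_insert (by simp [h12, h13, h14]), prod_insert (by simp [h23, h24]),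
      prod_pair h34, ← hx12, ← hx34]
    ring
  obtain ⟨rfl, rfl⟩ := eq_zero_of_sq_mul_sq_dvd_X_pow_add_C_mul_X_add_C (by omega)
    (hcast m (by omega) le_rfl) (hcast (m - 1) (by omega) (by omega)) hdvd
  refine hx (funext fun i => ?_)
  have hroot : (∏ j, (X - C (x j))).IsRoot (x i) := by
    rw [IsRoot, eval_prod]
    exact prod_eq_zero (mem_univ i) (by rw [eval_sub, eval_X, eval_C, sub_self])
  simp only [hf, map_zero, zero_mul, add_zero, IsRoot.def, eval_pow, eval_X] at hroot
  exact pow_eq_zero_iff (by omega) |>.mp hroot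
end

section
/- Let K be a field of characteristic zero or characteristic p with m ≤ p-1, m ≥ 5. No nontrivial solution (x₁,...,x_m) of the system x₁^k + ... + x_m^k = 0 (1 ≤ k ≤ m-2) has two distinct indices i₁ ≠ i₂ with x_{i₁} = x_{i₂} together with a third index i₃ (distinct from i₁, i₂) with x_{i₃} = 0. -/
/-!
By Newton's identities the vanishing of the power sums of degrees `1, …, m-2` forces the
elementary symmetric functions `e_1, …, e_{m-2}` to vanish (the relevant integers are invertible
in `K`), and `e_m = ∏ xᵢ = 0` because some coordinate is zero. Hence `∏ (X - xᵢ) = X^m + a X`.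
A repeated coordinate `c` is a double root: `c^m + a c = 0 = m c^(m-1) + a`, so
`(m - 1) c^m = 0`, whence `c = 0` and `a = 0`. Then every `xᵢ` is a root of `X^m`.
-/

open Polynomial Finset

lemma CharP.natCast_ne_zero_of_lt {R : Type*} [AddMonoidWithOne R] (p : ℕ) [CharP R p] {k : ℕ}
    (hk : 0 < k) (hkp : k < p) : (k : R) ≠ 0 := by
  rw [Ne, CharP.cast_eq_zero_iff R p]
  exact fun hdvd => absurd (Nat.le_of_dvd hk hdvd) (not_le.2 hkp)

theorem Polynomial.eq_zero_of_one_lt_rootMultiplicity_X_pow_add_C_mul_X {R : Type*} [CommRing R]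
    [IsDomain R] {n : ℕ} {a c : R} (hn : ((n - 1 : ℕ) : R) ≠ 0)
    (h : 1 < rootMultiplicity c (X ^ n + C a * X)) : a = 0 := by
  obtain ⟨k, rfl⟩ : ∃ k, n = k + 2 := ⟨n - 2, by
    by_contra hlt; exact hn (by rw [show n - 1 = 0 by omega, Nat.cast_zero])⟩
  have hne : X ^ (k + 2) + C a * X ≠ 0 := fun h0 => by simp [h0] at h
  obtain ⟨hroot, hder⟩ := (one_lt_rootMultiplicity_iff_isRoot hne).mp h
  simp only [IsRoot, eval_add, eval_pow, eval_X, eval_mul, eval_C, derivative_add,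
    derivative_X_pow, derivative_C_mul_X] at hroot hder
  have hc : ((k + 1 : ℕ) : R) * c ^ (k + 2) = 0 := by
    push_cast at hder ⊢
    linear_combination c * hder - hroot
  have hc0 : c = 0 := pow_eq_zero_iff (by omega) |>.mp <|
    (mul_eq_zero.mp hc).resolve_left (by simpa using hn)
  simpa [hc0] using hder

namespace Multiset

theorem esymm_map_univ_eq_zero_of_sum_pow_eq_zero {σ R : Type*} [Fintype σ] [CommRing R]
    [NoZeroDivisors R] (x : σ → R) {k : ℕ} (hk : (k : R) ≠ 0)
    (hpow : ∀ j, 0 < j → j ≤ k → ∑ i, x i ^ j = 0) :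
    (univ.val.map x).esymm k = 0 := by
  have newton := congrArg (MvPolynomial.aeval x) (MvPolynomial.mul_esymm_eq_sum σ R k)
  simp only [map_mul, map_sum, map_pow, map_neg, map_one, map_natCast,
    MvPolynomial.aeval_esymm_eq_multiset_esymm] at newton
  rw [Finset.sum_eq_zero, mul_zero] at newton
  · exact (mul_eq_zero.mp newton).resolve_left hk
  · intro a ha
    rw [Finset.mem_filter, Finset.HasAntidiagonal.mem_antidiagonal] at ha
    simp [MvPolynomial.psum, hpow a.2 (by omega) (by omega)]

theorem esymm_card_eq_prod {R : Type*} [CommSemiring R] (s : Multiset R) :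
    s.esymm (card s) = s.prod := by
  simp [esymm, powersetCard_self]

theorem prod_X_sub_C_eq_X_pow_add_C_mul_X {R : Type*} [CommRing R] (s : Multiset R)
    (hs : 2 ≤ card s) (hes : ∀ j, 0 < j → j ≤ card s → j ≠ card s - 1 → s.esymm j = 0) :
    (s.map fun t => X - C t).prod =
      X ^ card s + C ((-1) ^ (card s - 1) * s.esymm (card s - 1)) * X := by
  rw [prod_X_sub_X_eq_sum_esymm,
    sum_eq_add_of_mem 0 (card s - 1) (by simp) (by simp) (by omega)]
  · simp [esymm, Nat.sub_sub_self (by omega : 1 ≤ card s), mul_assoc]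
  · intro j hj hne
    rw [Finset.mem_range] at hj
    simp [hes j (by omega) (by omega) hne.2]

theorem eq_zero_of_mem_of_esymm_eq_zero {R : Type*} [CommRing R] [IsDomain R] [DecidableEq R]
    (s : Multiset R) (hcard : ((card s - 1 : ℕ) : R) ≠ 0)
    (hes : ∀ j, 0 < j → j ≤ card s → j ≠ card s - 1 → s.esymm j = 0) {c : R}
    (hc : 1 < s.count c) {y : R} (hy : y ∈ s) : y = 0 := by
  have h2 : 2 ≤ card s := by
    by_contra hlt; exact hcard (by rw [show card s - 1 = 0 by omega, Nat.cast_zero])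
  have hP := s.prod_X_sub_C_eq_X_pow_add_C_mul_X h2 hes
  have hroots : (s.map fun t => X - C t).prod.roots = s := roots_multiset_prod_X_sub_C s
  have ha := Polynomial.eq_zero_of_one_lt_rootMultiplicity_X_pow_add_C_mul_X hcard
    (by rwa [← hP, ← count_roots, hroots])
  have hy : (s.map fun t => X - C t).prod.IsRoot y := isRoot_of_mem_roots (hroots.symm ▸ hy)
  rw [hP, ha, C_0, zero_mul, add_zero, IsRoot.def, eval_pow, eval_X] at hy
  exact pow_eq_zero_iff (by omega) |>.mp hy

end Multiset

theorem stmt5_general {K : Type*} [Field K] (p m : ℕ)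
    (hchar : CharP K 0 ∨ (p.Prime ∧ 0 < p ∧ CharP K p ∧ m ≤ p - 1))
    (x : Fin m → K) (hx : x ≠ 0)
    (hsol : ∀ k : ℕ, 1 ≤ k → k ≤ m - 2 → ∑ i, x i ^ k = 0) :
    ¬ ∃ i₁ i₂ i₃ : Fin m, i₁ ≠ i₂ ∧ i₁ ≠ i₃ ∧ i₂ ≠ i₃ ∧
      x i₁ = x i₂ ∧ x i₃ = 0 := by
  rintro ⟨i₁, i₂, i₃, h12, -, -, heq, h3⟩
  classical
  have hm : 2 ≤ m := by have := Fin.val_ne_of_ne h12; omega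
  have hcast : ∀ k, 0 < k → k < m → (k : K) ≠ 0 := by
    rcases hchar with h0 | ⟨-, -, hp, hmp⟩
    · have := CharP.charP_to_charZero K
      exact fun k hk _ => Nat.cast_ne_zero.2 hk.ne'
    · exact fun k hk hkm => CharP.natCast_ne_zero_of_lt p hk (by omega)
  set s := univ.val.map x
  have hcard : Multiset.card s = m := by simp [s]
  have hes : ∀ j, 0 < j → j ≤ Multiset.card s → j ≠ Multiset.card s - 1 → s.esymm j = 0 := by
    intro j hj hjm hjne
    rcases eq_or_ne j (Multiset.card s) with rfl | hne
    · exact s.esymm_card_eq_prod ▸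
        Multiset.prod_eq_zero (h3 ▸ Multiset.mem_map_of_mem x (mem_univ i₃))
    · exact Multiset.esymm_map_univ_eq_zero_of_sum_pow_eq_zero x (hcast j hj (by omega))
        fun k hk hkj => hsol k hk (by omega)
  have hcount : 1 < s.count (x i₁) := by
    rw [Multiset.count_map, ← Finset.filter_val, Finset.card_val, Finset.one_lt_card]
    exact ⟨i₁, by simp, i₂, by simp [heq], h12⟩
  have hcard_sub_one : ((Multiset.card s - 1 : ℕ) : K) ≠ 0 :=
    hcard ▸ hcast (m - 1) (by omega) (by omega)
  exact hx <| funext fun i =>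
    s.eq_zero_of_mem_of_esymm_eq_zero hcard_sub_one hes hcount
      (Multiset.mem_map_of_mem x (mem_univ i))

/-- No nontrivial solution of the power-sum system of degrees 1..m-2 has two
distinct indices with equal coordinates together with a third index at which
the coordinate vanishes. -/
theorem stmt5 {K : Type*} [Field K] (p m : ℕ) (hm : 5 ≤ m)
    (hchar : CharP K 0 ∨ (p.Prime ∧ 0 < p ∧ CharP K p ∧ m ≤ p - 1))
    (x : Fin m → K) (hx : x ≠ 0)
    (hsol : ∀ k : ℕ, 1 ≤ k → k ≤ m - 2 → ∑ i, x i ^ k = 0) :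
    ¬ ∃ i₁ i₂ i₃ : Fin m, i₁ ≠ i₂ ∧ i₁ ≠ i₃ ∧ i₂ ≠ i₃ ∧
      x i₁ = x i₂ ∧ x i₃ = 0 :=
  stmt5_general p m hchar x hx hsol
end

section
/- Let m ≥ 2 and let α, β be m-th roots of unity in a field K with α ≠ 1, β ≠ 1, α ≠ β, and suppose m is invertible in K. Then G_{m-2}(α, β, 1) = 0, where G_{m-2}(x,y,z) = Σ_{i+j+k = m-2} x^i y^j z^k. -/
/-- If α, β are m-th roots of unity, distinct from 1 and from each other, and m
is invertible in K, then G_{m-2}(α, β, 1) = 0, where G_{m-2} is the complete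
homogeneous symmetric polynomial of degree m-2 in three variables. -/
theorem stmt8 {K : Type*} [Field K] (m : ℕ) (hm : 2 ≤ m) (α β : K)
    (hα : α ^ m = 1) (hβ : β ^ m = 1) (hα1 : α ≠ 1) (hβ1 : β ≠ 1) (hαβ : α ≠ β)
    (hminv : (m : K) ≠ 0) :
    (∑ i ∈ Finset.range (m - 1), ∑ j ∈ Finset.range (m - 1 - i),
      α ^ i * β ^ j * (1 : K) ^ (m - 2 - i - j)) = 0 := by
  obtain ⟨n, rfl⟩ : ∃ n, m = n + 2 := ⟨m - 2, by omega⟩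
  have hα0 : α ≠ 0 := by rintro rfl; simp at hα
  have hβ0 : β ≠ 0 := by rintro rfl; simp at hβ
  have hαinv : α ^ (n + 1) = α⁻¹ := by
    exact eq_inv_of_mul_eq_one_left (by rw [← pow_succ]; exact hα)
  have hβinv : β ^ (n + 1) = β⁻¹ := by
    exact eq_inv_of_mul_eq_one_left (by rw [← pow_succ]; exact hβ)
  have hαβ1 : α / β ≠ 1 := by
    intro h; exact hαβ (by field_simp at h; exact h)
  have hb1 : β - 1 ≠ 0 := sub_ne_zero.mpr hβ1
  have ha1 : α - 1 ≠ 0 := sub_ne_zero.mpr hα1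
  have hab : α / β - 1 ≠ 0 := sub_ne_zero.mpr hαβ1
  have hab2 : α - β ≠ 0 := sub_ne_zero.mpr hαβ
  have hred : n + 2 - 1 = n + 1 := by omega
  simp only [one_pow, mul_one, hred]
  have step1 : (∑ i ∈ Finset.range (n + 1), ∑ j ∈ Finset.range (n + 1 - i), α ^ i * β ^ j)
      = ∑ i ∈ Finset.range (n + 1), (β ^ (n + 1) * (α / β) ^ i - α ^ i) / (β - 1) := by
    refine Finset.sum_congr rfl fun i hi => ?_
    have hi' : i ≤ n + 1 := by simp at hi; omega
    rw [← Finset.mul_sum, geom_sum_eq hβ1, pow_sub₀ β hβ0 hi', div_pow]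
    field_simp
  rw [step1, ← Finset.sum_div, Finset.sum_sub_distrib, ← Finset.mul_sum,
    geom_sum_eq hαβ1, geom_sum_eq hα1, div_pow, hαinv, hβinv]
  field_simp
  ring
end

section
/- Let p ≥ 7 be a prime, m = p−1, and work over an algebraic closure of F_p. Every tuple (x₁,...,x_{p-1}) satisfying x₁^k + ... + x_{p-1}^k = 0 for 1 ≤ k ≤ p−3 also satisfies x₁^k + ... + x_{p-1}^k = 0 for all k with p+1 ≤ k ≤ 2p−5. In particular each such tuple lies on the Hermitian hypersurface x₁^{p+1} + ... + x_{p-1}^{p+1} = 0. -/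
/-!
By Newton's identities, the vanishing of the power sums of degrees `1, …, p - 3` forces the
elementary symmetric functions `e₁, …, e_{p-3}` of the `p - 1` coordinates to vanish, since
`1, …, p - 3` are invertible in characteristic `p`. For `k > p - 1` Newton's identity expresses
`p_k` through `e_i p_{k-i}` with `0 < i ≤ p - 1`, and only `i ∈ {p - 2, p - 1}` survives; for
`p + 1 ≤ k ≤ 2p - 5` the remaining degrees `k - i` lie in `[2, p - 3]`, so `p_k = 0`.
-/

open MvPolynomial Finset

namespace MvPolynomial

variable {σ R : Type*} [Fintype σ] [CommRing R]

theorem esymm_eq_zero_of_card_lt {n : ℕ} (h : Fintype.card σ < n) : esymm σ R n = 0 := by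
  rw [esymm, powersetCard_eq_empty.mpr (by rwa [card_univ]), sum_empty]

theorem eval_psum (x : σ → R) (k : ℕ) : eval x (psum σ R k) = ∑ i, x i ^ k := by
  simp [psum]

theorem eval_esymm_eq_zero_of_sum_pow_eq_zero [NoZeroDivisors R] (x : σ → R) {k : ℕ}
    (hk : (k : R) ≠ 0) (hsum : ∀ j, 1 ≤ j → j ≤ k → ∑ i, x i ^ j = 0) :
    eval x (esymm σ R k) = 0 := by
  have newton := congrArg (eval x) (mul_esymm_eq_sum σ R k)
  have hrhs : eval x (∑ a ∈ antidiagonal k with a.1 < k,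
      (-1) ^ a.1 * esymm σ R a.1 * psum σ R a.2) = 0 := by
    rw [map_sum]
    refine sum_eq_zero fun a ha => ?_
    rw [mem_filter, HasAntidiagonal.mem_antidiagonal] at ha
    rw [map_mul, eval_psum, hsum a.2 (by omega) (by omega), mul_zero]
  rw [map_mul, map_mul, hrhs, mul_zero, map_natCast] at newton
  exact (mul_eq_zero.mp newton).resolve_left hk

theorem sum_pow_eq_zero_of_card_lt (x : σ → R) {k : ℕ} (hk : Fintype.card σ < k)
    (h : ∀ i j, 0 < i → 0 < j → i + j = k → i ≤ Fintype.card σ →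
      eval x (esymm σ R i) = 0 ∨ ∑ l, x l ^ j = 0) :
    ∑ l, x l ^ k = 0 := by
  rw [← eval_psum, psum_eq_mul_esymm_sub_sum σ R k (by omega), esymm_eq_zero_of_card_lt hk,
    mul_zero, zero_sub, map_neg, map_sum, neg_eq_zero]
  refine sum_eq_zero fun a ha => ?_
  rw [mem_filter, HasAntidiagonal.mem_antidiagonal, Set.mem_Ioo] at ha
  obtain ⟨hsum, hpos, hlt⟩ := ha
  rw [map_mul, map_mul, eval_psum]
  by_cases hcard : a.1 ≤ Fintype.card σ
  · rcases h a.1 a.2 hpos (by omega) hsum hcard with he | hp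
    · rw [he, mul_zero, zero_mul]
    · rw [hp, mul_zero]
  · rw [esymm_eq_zero_of_card_lt (by omega), map_zero, mul_zero, zero_mul]

end MvPolynomial

/-- For m = p-1 over the algebraic closure of F_p, every solution of the
power-sum system of degrees 1..p-3 also satisfies the power-sum equations of
all degrees k with p+1 ≤ k ≤ 2p−5; in particular it lies on the Hermitian
hypersurface of degree p+1. -/
theorem stmt11 (p : ℕ) [Fact p.Prime] (hp7 : 7 ≤ p)
    (x : Fin (p - 1) → AlgebraicClosure (ZMod p))
    (hsol : ∀ k : ℕ, 1 ≤ k → k ≤ p - 3 → ∑ i, x i ^ k = 0) :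
    (∀ k : ℕ, p + 1 ≤ k → k ≤ 2 * p - 5 → ∑ i, x i ^ k = 0) ∧
      ∑ i, x i ^ (p + 1) = 0 := by
  have hesymm : ∀ i, 1 ≤ i → i ≤ p - 3 → eval x (esymm (Fin (p - 1)) _ i) = 0 := by
    intro i hi1 hi2
    refine eval_esymm_eq_zero_of_sum_pow_eq_zero x ?_ fun j hj1 hj2 => hsol j hj1 (by omega)
    rw [ne_eq, CharP.cast_eq_zero_iff (AlgebraicClosure (ZMod p)) p]
    exact fun hdvd => absurd (Nat.le_of_dvd (by omega) hdvd) (by omega)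
  have main : ∀ k, p + 1 ≤ k → k ≤ 2 * p - 5 → ∑ i, x i ^ k = 0 := by
    intro k hk1 hk2
    refine sum_pow_eq_zero_of_card_lt x (by rw [Fintype.card_fin]; omega)
      fun i j _ _ hij hcard => ?_
    rw [Fintype.card_fin] at hcard
    by_cases hi : i ≤ p - 3
    · exact .inl (hesymm i (by omega) hi)
    · exact .inr (hsol j (by omega) (by omega))
  exact ⟨main, main (p + 1) le_rfl (by omega)⟩
end

section
/- Let p ≥ 7 be a prime. The solutions in F_p^p of the system x₁^k + x₂^k + ... + x_p^k = 0 for 1 ≤ k ≤ (p−1)/2 are exactly the p-tuples all of whose components are equal, together with the p-tuples whose components form a permutation of all elements of F_p. -/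
/-!
Let `f = ∏ (X - xᵢ)` and `m = (p - 1) / 2`. By Newton's identities (`k` is invertible in
`𝔽_p` for `k < p`) the vanishing power sums make `e₁, …, e_m` vanish, so `f = X^p - X + h`
with `deg h ≤ m`. If `h = 0`, the `xᵢ` are the roots of `X^p - X`, i.e. all of `𝔽_p`.
Otherwise every distinct root of `f` is a root of `h`, so there are at most `m` of them, and
the repeated roots account for at least `p - m > m` roots of `f' = h' - 1`, whose degree is at
most `m`. Hence `f' = 0`, so `f = X^p + c`, and every `xᵢ` equals `-c`.
-/

open Polynomial Finset

theorem Multiset.esymm_map_univ_eq_zero_of_sum_pow_eq_zero_s12 {σ R : Type*} [Fintype σ] [CommRing R]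
    [NoZeroDivisors R] (x : σ → R) {k : ℕ} (hk : (k : R) ≠ 0)
    (h : ∀ j, 1 ≤ j → j ≤ k → ∑ i, x i ^ j = 0) :
    (univ.val.map x).esymm k = 0 := by
  have newton := congrArg (MvPolynomial.aeval x) (MvPolynomial.mul_esymm_eq_sum σ R k)
  simp only [map_mul, map_natCast, map_sum, map_pow, map_neg, map_one,
    MvPolynomial.aeval_esymm_eq_multiset_esymm, MvPolynomial.psum, MvPolynomial.aeval_X] at newton
  rw [Finset.sum_eq_zero, mul_zero] at newton
  · exact (mul_eq_zero.mp newton).resolve_left hk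
  · intro a ha
    simp only [Finset.mem_filter, HasAntidiagonal.mem_antidiagonal] at ha
    rw [h a.2 (by omega) (by omega), mul_zero]

theorem Multiset.natDegree_prod_X_sub_C_sub_X_pow_card_le {R : Type*} [CommRing R] [Nontrivial R]
    (s : Multiset R) {m : ℕ} (he : ∀ k, 1 ≤ k → k ≤ m → s.esymm k = 0) :
    ((s.map fun a => X - C a).prod - X ^ Multiset.card s).natDegree ≤
      Multiset.card s - m - 1 := by
  rw [natDegree_le_iff_coeff_eq_zero]
  intro n hn
  rw [coeff_sub, coeff_X_pow]
  rcases lt_or_ge (Multiset.card s) n with hlt | hle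
  · rw [coeff_eq_zero_of_natDegree_lt (by rwa [natDegree_multiset_prod_X_sub_C_eq_card]),
      if_neg hlt.ne', sub_zero]
  · rw [Multiset.prod_X_sub_C_coeff s hle]
    rcases hle.eq_or_lt with heq | hlt
    · simp [heq, Multiset.esymm]
    · rw [he _ (by omega) (by omega), if_neg hlt.ne, mul_zero, sub_zero]

namespace Polynomial

theorem card_roots_sub_card_roots_toFinset_le_natDegree_derivative {R : Type*} [CommRing R]
    [IsDomain R] [DecidableEq R] (f : R[X]) (hf : derivative f ≠ 0) :
    Multiset.card f.roots - f.roots.toFinset.card ≤ (derivative f).natDegree := by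
  have hle : f.roots - f.roots.dedup ≤ (derivative f).roots := by
    rw [Multiset.le_iff_count]
    intro a
    calc Multiset.count a (f.roots - f.roots.dedup) ≤ Multiset.count a f.roots - 1 := by
          rw [Multiset.count_sub, Multiset.count_dedup]
          split_ifs with ha
          · rfl
          · simp [Multiset.count_eq_zero.mpr ha]
      _ ≤ Multiset.count a (derivative f).roots := by
          rw [count_roots, count_roots]
          exact rootMultiplicity_sub_one_le_derivative_rootMultiplicity_of_ne_zero f a hf
  calc Multiset.card f.roots - f.roots.toFinset.card
      = Multiset.card (f.roots - f.roots.dedup) := by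
        rw [Multiset.card_sub (Multiset.dedup_le _), Multiset.card_toFinset]
    _ ≤ Multiset.card (derivative f).roots := Multiset.card_le_card hle
    _ ≤ (derivative f).natDegree := card_roots' _

theorem card_roots_toFinset_le_natDegree_sub_X_pow_card_sub_X {K : Type*} [Field K] [Fintype K]
    [DecidableEq K] {f : K[X]} (hf : f ≠ X ^ Fintype.card K - X) :
    f.roots.toFinset.card ≤ (f - (X ^ Fintype.card K - X)).natDegree := by
  have hsub : f.roots.toFinset ⊆ (f - (X ^ Fintype.card K - X)).roots.toFinset := by
    intro a ha
    simp only [Multiset.mem_toFinset, mem_roots', ne_eq, sub_eq_zero, IsRoot.def, eval_sub,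
      eval_pow, eval_X, FiniteField.pow_card, sub_self] at ha ⊢
    exact ⟨hf, ha.2⟩
  exact (card_le_card hsub).trans ((Multiset.toFinset_card_le _).trans (card_roots' _))

theorem eq_X_pow_add_C_of_derivative_eq_zero {R : Type*} [CommRing R] [IsDomain R] (p : ℕ)
    [Fact p.Prime] [CharP R p] {f : R[X]} (hmonic : f.Monic) (hdeg : f.natDegree = p)
    (hf : derivative f = 0) : f = X ^ p + C (f.coeff 0) := by
  have hp : 0 < p := (Fact.out : p.Prime).pos
  have hexp := expand_contract p hf hp.ne'
  have hdeg' : (contract p f).natDegree = 1 := by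
    apply Nat.eq_of_mul_eq_mul_right hp
    rw [← natDegree_expand, hexp, hdeg, one_mul]
  have hmonic' : (contract p f).Monic := by rwa [← monic_expand_iff hp, hexp]
  rw [← hexp, hmonic'.eq_X_add_C hdeg']
  simp [coeff_contract hp.ne', hp.ne]

end Polynomial

theorem ZMod.derivative_eq_zero_of_natDegree_sub_X_pow_sub_X_le {p m : ℕ} [Fact p.Prime]
    (hm : 2 * m < p) {f : (ZMod p)[X]} (hroots : Multiset.card f.roots = p)
    (hf : f ≠ X ^ p - X) (hdeg : (f - (X ^ p - X)).natDegree ≤ m) : derivative f = 0 := by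
  classical
  by_contra hne
  have hdistinct : f.roots.toFinset.card ≤ m := by
    have := card_roots_toFinset_le_natDegree_sub_X_pow_card_sub_X (f := f)
    rw [ZMod.card] at this
    exact (this hf).trans hdeg
  have hrepeated := card_roots_sub_card_roots_toFinset_le_natDegree_derivative f hne
  have hderiv : (derivative f).natDegree ≤ m := by
    have : derivative f = derivative (f - (X ^ p - X)) - 1 := by simp [derivative_X_pow]
    rw [this]
    refine (natDegree_sub_le _ _).trans (max_le ?_ (by simp))
    exact (natDegree_derivative_le _).trans (by omega)
  omega

theorem ZMod.exists_forall_eq_or_eq_univ_of_esymm_eq_zero {p : ℕ} [Fact p.Prime] (hp : Odd p)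
    (s : Multiset (ZMod p)) (hs : Multiset.card s = p)
    (he : ∀ k, 1 ≤ k → k ≤ (p - 1) / 2 → s.esymm k = 0) :
    (∃ c, ∀ a ∈ s, a = c) ∨ s = univ.val := by
  set m := (p - 1) / 2
  have hm : 1 ≤ m ∧ p = 2 * m + 1 := by
    have := (Fact.out : p.Prime).two_le; obtain ⟨k, rfl⟩ := hp; omega
  set f := (s.map fun a => X - C a).prod
  have hmonic : f.Monic := monic_multiset_prod_of_monic _ _ fun a _ => monic_X_sub_C a
  have hroots : f.roots = s := roots_multiset_prod_X_sub_C s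
  have hdeg : f.natDegree = p := by rw [natDegree_multiset_prod_X_sub_C_eq_card, hs]
  have hlow : (f - (X ^ p - X)).natDegree ≤ m := by
    have := s.natDegree_prod_X_sub_C_sub_X_pow_card_le he
    rw [hs] at this
    rw [show f - (X ^ p - X) = (f - X ^ p) + X by ring]
    exact (natDegree_add_le _ _).trans (max_le (this.trans (by omega)) (natDegree_X_le.trans hm.1))
  by_cases hX : f = X ^ p - X
  · right
    rw [← hroots, hX, ← FiniteField.roots_X_pow_card_sub_X (ZMod p), ZMod.card]
  left
  have hder : derivative f = 0 :=
    ZMod.derivative_eq_zero_of_natDegree_sub_X_pow_sub_X_le (by omega) (hroots ▸ hs) hX hlow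
  refine ⟨-f.coeff 0, fun a ha => ?_⟩
  have hroot : f.IsRoot a := isRoot_of_mem_roots (hroots ▸ ha)
  rw [eq_X_pow_add_C_of_derivative_eq_zero p hmonic hdeg hder] at hroot
  simp only [IsRoot.def, eval_add, eval_pow, eval_X, eval_C, ZMod.pow_card] at hroot
  exact eq_neg_of_add_eq_zero_left hroot

/-- Rédei's theorem: for p ≥ 7 prime, the solutions in F_p^p of the system
x₁^k + ⋯ + x_p^k = 0 for 1 ≤ k ≤ (p−1)/2 are exactly the constant p-tuples
together with the p-tuples whose components are a permutation of all of F_p. -/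
theorem stmt12 (p : ℕ) [Fact p.Prime] (hp : 7 ≤ p) (x : Fin p → ZMod p) :
    (∀ k : ℕ, 1 ≤ k → k ≤ (p - 1) / 2 → ∑ i, x i ^ k = 0) ↔
      ((∃ c : ZMod p, ∀ i, x i = c) ∨ Function.Bijective x) := by
  constructor
  · intro hsum
    have he : ∀ k, 1 ≤ k → k ≤ (p - 1) / 2 → (univ.val.map x).esymm k = 0 :=
      fun k hk1 hk2 => Multiset.esymm_map_univ_eq_zero_of_sum_pow_eq_zero_s12 x
        (by rw [Ne, ZMod.natCast_eq_zero_iff]; exact Nat.not_dvd_of_pos_of_lt hk1 (by omega))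
        fun j hj1 hj2 => hsum j hj1 (hj2.trans hk2)
    have hodd : Odd p := (Fact.out : p.Prime).odd_of_ne_two (by omega)
    rcases ZMod.exists_forall_eq_or_eq_univ_of_esymm_eq_zero hodd _ (by simp) he with
      ⟨c, hc⟩ | huniv
    · exact Or.inl ⟨c, fun i => hc (x i) (Multiset.mem_map_of_mem x (mem_univ_val i))⟩
    · refine Or.inr ((Fintype.bijective_iff_surjective_and_card x).mpr ⟨fun a => ?_, by simp⟩)
      obtain ⟨i, -, hi⟩ := Multiset.mem_map.mp (huniv ▸ mem_univ_val a)
      exact ⟨i, hi⟩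
  · rintro (⟨c, hc⟩ | hbij) k hk1 hk2
    · simp [hc]
    · rw [Fintype.sum_bijective x hbij _ (fun a => a ^ k) fun _ => rfl]
      exact FiniteField.sum_pow_lt_card_sub_one (ZMod p) k (by rw [ZMod.card]; omega)
end

section
/- Let p ≥ 7 be a prime and η a primitive element of F_p. Up to a nonzero scalar, the solutions in F_p^{p-1} of the system x₁^k + ... + x_{p-1}^k = 0 (1 ≤ k ≤ p−3) with no coordinate zero and pairwise distinct coordinates are exactly the (p-2)! tuples whose coordinates are a permutation of (η, η², ..., η^{p-2}, 1), i.e., a permutation of the nonzero elements of F_p. In particular the number of projective F_p-rational solutions is (p−2)!. -/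
section Aux

variable (p : ℕ) [Fact p.Prime]

/-- Injective nonzero tuples give bijections onto units. -/
lemma aux_bij (x : Fin (p - 1) → ZMod p) (h0 : ∀ i, x i ≠ 0)
    (hinj : Function.Injective x) :
    Function.Bijective (fun i => Units.mk0 (x i) (h0 i)) := by
  rw [Fintype.bijective_iff_injective_and_card]
  refine ⟨fun a b h => hinj ?_, by rw [Fintype.card_fin, ZMod.card_units p]⟩
  simpa using congrArg Units.val h

lemma aux_sum (x : Fin (p - 1) → ZMod p) (h0 : ∀ i, x i ≠ 0)
    (hinj : Function.Injective x) (k : ℕ) (hk1 : 1 ≤ k) (hk2 : k ≤ p - 3) :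
    ∑ i, x i ^ k = 0 := by
  classical
  have hbij := aux_bij p x h0 hinj
  have h1 : ∑ i, x i ^ k = ∑ u : (ZMod p)ˣ, ((u : ZMod p)) ^ k := by
    rw [← Function.Bijective.sum_comp hbij (fun u => ((u : ZMod p)) ^ k)]
    simp
  have h2 := FiniteField.sum_pow_units (ZMod p) k
  rw [ZMod.card p] at h2
  have hp2 : 2 ≤ p := (Fact.out : p.Prime).two_le
  have hnd : ¬ (p - 1) ∣ k := by
    intro hd
    have := Nat.le_of_dvd (by omega) hd
    omega
  rw [h1, h2, if_neg hnd]

end Aux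

/-- For p ≥ 7 prime and η a primitive element of F_p: a tuple in F_p^{p-1} with
pairwise distinct nonzero coordinates solves the power-sum system of degrees
1..p-3 iff its coordinates are a permutation of (η, η², ..., η^{p-2}, 1), i.e.
of the nonzero elements of F_p. The number of such tuples is (p-1)·(p-2)!,
i.e. (p-2)! up to nonzero scalar. -/
theorem stmt14 (p : ℕ) [Fact p.Prime] (hp : 7 ≤ p) (η : ZMod p)
    (hη : IsPrimitiveRoot η (p - 1)) :
    (∀ x : Fin (p - 1) → ZMod p, (∀ i, x i ≠ 0) → Function.Injective x →
      ((∀ k : ℕ, 1 ≤ k → k ≤ p - 3 → ∑ i, x i ^ k = 0) ↔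
        ∃ σ : Equiv.Perm (Fin (p - 1)),
          ∀ i : Fin (p - 1), x (σ i) = η ^ ((i : ℕ) + 1))) ∧
    Nat.card {x : Fin (p - 1) → ZMod p //
        (∀ i, x i ≠ 0) ∧ Function.Injective x ∧
        (∀ k : ℕ, 1 ≤ k → k ≤ p - 3 → ∑ i, x i ^ k = 0)} =
      (p - 1) * Nat.factorial (p - 2) := by
  classical
  have hp2 : 2 ≤ p := by omega
  -- the tuple (η, η², ...) of powers
  have hη0 : η ≠ 0 := by
    intro h
    have := hη.pow_eq_one
    rw [h, zero_pow (by omega)] at this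
    exact zero_ne_one this
  set e : Fin (p - 1) → ZMod p := fun i => η ^ ((i : ℕ) + 1) with he
  have he0 : ∀ i, e i ≠ 0 := fun i => pow_ne_zero _ hη0
  have heinj : Function.Injective e := by
    intro a b h
    have h' : η ^ (a : ℕ) * η = η ^ (b : ℕ) * η := by
      simpa [e, pow_succ] using h
    have h'' : η ^ (a : ℕ) = η ^ (b : ℕ) := mul_right_cancel₀ hη0 h'
    exact Fin.ext (hη.pow_inj a.isLt b.isLt h'')
  constructor
  · intro x h0 hinj
    constructor
    · intro _
      -- both x and e are bijections onto units; compose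
      let ux := Equiv.ofBijective _ (aux_bij p x h0 hinj)
      let ue := Equiv.ofBijective _ (aux_bij p e he0 heinj)
      refine ⟨ue.trans ux.symm, fun i => ?_⟩
      have : ux (ux.symm (ue i)) = ue i := ux.apply_symm_apply _
      have h2 := congrArg Units.val this
      simpa [ux, ue, Equiv.ofBijective] using h2
    · rintro ⟨σ, hσ⟩ k hk1 hk2
      rw [← Equiv.sum_comp σ (fun i => x i ^ k)]
      simp only [hσ]
      exact aux_sum p e he0 heinj k hk1 hk2
  · -- counting
    have hcard : Fintype.card {y : ZMod p // y ≠ 0} = p - 1 := by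
      rw [Fintype.card_subtype_compl]
      simp [ZMod.card p]
    let E : {x : Fin (p - 1) → ZMod p //
        (∀ i, x i ≠ 0) ∧ Function.Injective x ∧
        (∀ k : ℕ, 1 ≤ k → k ≤ p - 3 → ∑ i, x i ^ k = 0)} ≃
        (Fin (p - 1) ↪ {y : ZMod p // y ≠ 0}) :=
      { toFun := fun x => ⟨fun i => ⟨x.1 i, x.2.1 i⟩,
          fun a b h => x.2.2.1 (congrArg Subtype.val h)⟩
        invFun := fun f => ⟨fun i => (f i).1,
          fun i => (f i).2,
          fun a b h => f.injective (Subtype.ext h),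
          aux_sum p _ (fun i => (f i).2) (fun a b h => f.injective (Subtype.ext h))⟩
        left_inv := fun x => rfl
        right_inv := fun f => rfl }
    rw [Nat.card_congr E, Nat.card_eq_fintype_card, Fintype.card_embedding_eq, hcard,
      Fintype.card_fin]
    rw [Nat.descFactorial_self]
    have : p - 1 = (p - 2) + 1 := by omega
    rw [this, Nat.factorial_succ]
end

section
/- Let m ≥ 5 and let ε be a primitive (m-1)-th root of unity in an algebraically closed field K (with char K = 0 or char K = p ≥ 7, m ≤ p-1). If σ is a permutation of {1,...,m-1} and c ∈ K is such that ε^{σ(i)} = c·ε^i for all 1 ≤ i ≤ m-1, then σ is a power of the cyclic shift i ↦ i+1 mod (m-1). Consequently the stabilizer of the point (ε : ε² : ... : ε^{m-1} : 0) in Sym_m acting by coordinate permutation is cyclic of order m-1. -/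
/-!
Comparing the relation `ε ^ (σ i + 1) = c * ε ^ (i + 1)` with its instance at `i = 0` eliminates
`c` and gives `σ i ≡ i + σ 0` modulo the order `m - 1` of `ε`, so `σ` is a rotation. A coordinate
permutation fixing the point up to a scalar `d ≠ 0` must fix the zero coordinate, and on the
others it satisfies that relation with `c = d`; conversely every rotation does, with `d` a power
of `ε`. Hence the stabilizer consists of the `m - 1` rotations extended by a fixed last point.
-/

open Fin.NatCast

section Rotation

variable {M : Type*} [CommMonoid M] {n : ℕ} {ε : M}

theorem finRotate_pow_apply (j : ℕ) (i : Fin (n + 1)) : (finRotate (n + 1) ^ j) i = i + j := by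
  induction j with
  | zero => simp
  | succ j ih => rw [pow_succ', Equiv.Perm.mul_apply, ih, finRotate_apply, Nat.cast_succ, add_assoc]

theorem IsPrimitiveRoot.pow_eq_pow_iff_modEq (hε : IsPrimitiveRoot ε (n + 1)) {a b : ℕ} :
    ε ^ a = ε ^ b ↔ a ≡ b [MOD n + 1] := by
  rw [hε.eq_orderOf]
  exact (hε.isOfFinOrder n.succ_ne_zero).pow_eq_pow_iff_modEq

theorem Fin.eq_add_of_val_modEq {i j k : Fin (n + 1)} (h : (i : ℕ) ≡ j + k [MOD n + 1]) :
    i = j + k :=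
  Fin.ext <| by rw [Fin.val_add, ← h, Nat.mod_eq_of_lt i.isLt]

theorem eq_finRotate_pow_of_pow_apply_eq_mul (hε : IsPrimitiveRoot ε (n + 1))
    {σ : Equiv.Perm (Fin (n + 1))} {c : M}
    (hσ : ∀ i : Fin (n + 1), ε ^ ((σ i : ℕ) + 1) = c * ε ^ ((i : ℕ) + 1)) :
    σ = finRotate (n + 1) ^ (σ 0 : ℕ) := by
  ext1 i
  have hpow : ε ^ ((σ i : ℕ) + 2) = ε ^ ((σ 0 : ℕ) + i + 2) := by
    have h0 := hσ 0
    rw [Fin.val_zero, zero_add, pow_one] at h0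
    calc ε ^ ((σ i : ℕ) + 2) = ε ^ ((σ i : ℕ) + 1) * ε := pow_succ _ _
      _ = ε ^ ((σ 0 : ℕ) + 1) * ε ^ ((i : ℕ) + 1) := by rw [hσ i, h0, mul_right_comm]
      _ = ε ^ ((σ 0 : ℕ) + i + 2) := by rw [← pow_add, add_add_add_comm]
  have hmod : (σ i : ℕ) ≡ i + σ 0 [MOD n + 1] := by
    refine Nat.ModEq.add_right_cancel' 2 ?_
    rw [add_comm (i : ℕ)]
    exact hε.pow_eq_pow_iff_modEq.mp hpow
  rw [finRotate_pow_apply, Fin.cast_val_eq_self]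
  exact Fin.eq_add_of_val_modEq hmod

theorem pow_finRotate_pow_apply_succ (hε : IsPrimitiveRoot ε (n + 1)) (j : ℕ) (i : Fin (n + 1)) :
    ε ^ (((finRotate (n + 1) ^ j) i : ℕ) + 1) = ε ^ j * ε ^ ((i : ℕ) + 1) := by
  rw [← pow_add, hε.pow_eq_pow_iff_modEq, finRotate_pow_apply, Fin.val_add, Fin.val_natCast]
  calc ((i : ℕ) + j % (n + 1)) % (n + 1) + 1 ≡ (i : ℕ) + j % (n + 1) + 1 [MOD n + 1] :=
        (Nat.mod_modEq _ _).add_right 1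
    _ ≡ (i : ℕ) + j + 1 [MOD n + 1] := ((Nat.mod_modEq _ _).add_left _).add_right 1
    _ = j + ((i : ℕ) + 1) := by ring

end Rotation

namespace Equiv.Perm

def extendLast {n : ℕ} (σ : Perm (Fin n)) : Perm (Fin (n + 1)) :=
  finSuccEquivLast.symm.permCongr σ.optionCongr

variable {n : ℕ}

@[simp]
theorem extendLast_castSucc (σ : Perm (Fin n)) (i : Fin n) :
    extendLast σ i.castSucc = (σ i).castSucc := by
  simp [extendLast, permCongr_apply]

@[simp]
theorem extendLast_last (σ : Perm (Fin n)) : extendLast σ (Fin.last n) = Fin.last n := by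
  simp [extendLast, permCongr_apply]

theorem exists_extendLast_eq_of_apply_last {τ : Perm (Fin (n + 1))}
    (h : τ (Fin.last n) = Fin.last n) : ∃ σ : Perm (Fin n), extendLast σ = τ := by
  set τ' : Perm (Option (Fin n)) := finSuccEquivLast.permCongr τ
  have hnone : τ' none = none := by simp [τ', permCongr_apply, h]
  refine ⟨removeNone τ', ?_⟩
  have hτ' : τ'.removeNone.optionCongr = τ' := by
    conv_rhs => rw [← decomposeOption.symm_apply_apply τ']
    ext1 i
    simp [hnone]
  rw [extendLast, hτ']
  ext i
  simp [τ', permCongr_apply]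

theorem injective_extendLast_finRotate_pow :
    Function.Injective fun j : Fin (n + 1) => extendLast (finRotate (n + 1) ^ (j : ℕ)) := by
  intro j k h
  have h0 := congr($h (Fin.castSucc 0))
  simp only [extendLast_castSucc, finRotate_pow_apply, zero_add, Fin.cast_val_eq_self] at h0
  exact Fin.castSucc_injective _ h0

end Equiv.Perm

section Stabilizer

open Equiv Perm

variable {M : Type*} [CommMonoidWithZero M] {n : ℕ} {ε : M}

def rootPoint (ε : M) (m : ℕ) (i : Fin m) : M :=
  if (i : ℕ) < m - 1 then ε ^ ((i : ℕ) + 1) else 0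

@[simp]
theorem rootPoint_castSucc (ε : M) (i : Fin (n + 1)) :
    rootPoint ε (n + 2) i.castSucc = ε ^ ((i : ℕ) + 1) :=
  if_pos i.isLt

@[simp]
theorem rootPoint_last (ε : M) : rootPoint ε (n + 2) (Fin.last (n + 1)) = 0 :=
  if_neg (by simp)

theorem rootPoint_ne_zero_iff [Nontrivial M] (hε : IsPrimitiveRoot ε (n + 1)) {i : Fin (n + 2)} :
    rootPoint ε (n + 2) i ≠ 0 ↔ i ≠ Fin.last (n + 1) := by
  induction i using Fin.lastCases with
  | last => simp
  | cast i => simpa using ((hε.isUnit n.succ_ne_zero).pow _).ne_zero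

theorem stabilizes_rootPoint_iff [Nontrivial M] (hε : IsPrimitiveRoot ε (n + 1))
    (τ : Perm (Fin (n + 2))) :
    (∃ d : M, d ≠ 0 ∧ ∀ i, rootPoint ε (n + 2) (τ i) = d * rootPoint ε (n + 2) i) ↔
      ∃ j : Fin (n + 1), extendLast (finRotate (n + 1) ^ (j : ℕ)) = τ := by
  constructor
  · rintro ⟨d, -, hτ⟩
    have hlast : τ (Fin.last (n + 1)) = Fin.last (n + 1) := by
      by_contra hne
      exact (rootPoint_ne_zero_iff hε).mpr hne (by simpa using hτ (Fin.last (n + 1)))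
    obtain ⟨σ, rfl⟩ := exists_extendLast_eq_of_apply_last hlast
    have hσ (i : Fin (n + 1)) : ε ^ ((σ i : ℕ) + 1) = d * ε ^ ((i : ℕ) + 1) := by
      simpa using hτ i.castSucc
    exact ⟨σ 0, by rw [← eq_finRotate_pow_of_pow_apply_eq_mul hε hσ]⟩
  · rintro ⟨j, rfl⟩
    refine ⟨ε ^ (j : ℕ), ((hε.isUnit n.succ_ne_zero).pow _).ne_zero, fun i => ?_⟩
    induction i using Fin.lastCases with
    | last => simp
    | cast i => simpa using pow_finRotate_pow_apply_succ hε j i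

end Stabilizer

theorem stmt16_general {K : Type*} [Field K] (m : ℕ) (hm : 5 ≤ m)
    (ε : K) (hε : IsPrimitiveRoot ε (m - 1))
    (σ : Equiv.Perm (Fin (m - 1))) (c : K)
    (hσ : ∀ i : Fin (m - 1), ε ^ ((σ i : ℕ) + 1) = c * ε ^ ((i : ℕ) + 1)) :
    (∃ j : ℕ, σ = (finRotate (m - 1)) ^ j) ∧
    Nat.card {τ : Equiv.Perm (Fin m) // ∃ d : K, d ≠ 0 ∧ ∀ i : Fin m,
        (if ((τ i : ℕ)) < m - 1 then ε ^ ((τ i : ℕ) + 1) else 0) =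
          d * (if ((i : ℕ)) < m - 1 then ε ^ ((i : ℕ) + 1) else 0)} = m - 1 := by
  obtain ⟨n, rfl⟩ : ∃ n, m = n + 2 := ⟨m - 2, by omega⟩
  refine ⟨⟨_, eq_finRotate_pow_of_pow_apply_eq_mul hε hσ⟩, ?_⟩
  calc _ = Nat.card (Set.range fun j : Fin (n + 1) =>
          Equiv.Perm.extendLast (finRotate (n + 1) ^ (j : ℕ))) :=
        Nat.card_congr (Equiv.subtypeEquivRight (stabilizes_rootPoint_iff hε))
    _ = n + 1 := by
        rw [Nat.card_range_of_injective Equiv.Perm.injective_extendLast_finRotate_pow]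
        simp

/-- If a permutation σ of {1,…,m-1} satisfies ε^{σ(i)} = c·ε^i for all i (ε a
primitive (m-1)-th root of unity), then σ is a power of the cyclic shift;
consequently the stabilizer in Sym_m of the projective point
(ε : ε² : ⋯ : ε^{m-1} : 0) under coordinate permutation has order m-1. -/
theorem stmt16 {K : Type*} [Field K] [IsAlgClosed K] (p m : ℕ) (hm : 5 ≤ m)
    (hchar : CharP K 0 ∨ (p.Prime ∧ 7 ≤ p ∧ CharP K p ∧ m ≤ p - 1))
    (ε : K) (hε : IsPrimitiveRoot ε (m - 1))
    (σ : Equiv.Perm (Fin (m - 1))) (c : K)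
    (hσ : ∀ i : Fin (m - 1), ε ^ ((σ i : ℕ) + 1) = c * ε ^ ((i : ℕ) + 1)) :
    (∃ j : ℕ, σ = (finRotate (m - 1)) ^ j) ∧
    Nat.card {τ : Equiv.Perm (Fin m) // ∃ d : K, d ≠ 0 ∧ ∀ i : Fin m,
        (if ((τ i : ℕ)) < m - 1 then ε ^ ((τ i : ℕ) + 1) else 0) =
          d * (if ((i : ℕ)) < m - 1 then ε ^ ((i : ℕ) + 1) else 0)} = m - 1 :=
  stmt16_general m hm ε hε σ c hσ
end

section
/- Let m ≥ 5 and let ω be a primitive m-th root of unity in an algebraically closed field K (char K = 0 or char K = p ≥ 7 with m ≤ p-1). The stabilizer of the projective point P_ω = (ω : ω² : ... : ω^m) in Sym_m acting by coordinate permutation is the cyclic group of order m generated by the m-cycle shifting coordinates; hence the Sym_m-orbit of P_ω has length (m-1)!. -/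
/-!
As `ω` is a primitive `m`-th root of unity, `ψ a = ω ^ a` is an injective additive character of
`Fin m`, and `P_ω = [ω ψ] = [ψ]`.
A permutation `σ` fixes `[ψ]` iff `ψ ∘ σ = c • ψ`; evaluating at `0` gives `c = ψ (σ 0)`, hence
`ψ (σ i) = ψ (i + σ 0)` and `σ` is the rotation by `σ 0`. A point `[ψ ∘ σ]` of the orbit,
normalized at the coordinate `L`, is `i ↦ ψ (σ i - σ L)`; composing `σ` with a rotation so
that it fixes `L` gives a bijection between the normalized orbit and the stabilizer of `L` in
`Sym_m`, which has `(m - 1)!` elements.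
-/

open Equiv Function
open scoped Nat

theorem Equiv.Perm.natCard_stabilizer {α : Type*} [Finite α] (a : α) :
    Nat.card (MulAction.stabilizer (Perm α) a) = (Nat.card α - 1)! := by
  have : Nonempty α := ⟨a⟩
  have hα : Nat.card α = Nat.card α - 1 + 1 := (Nat.succ_pred_eq_of_pos Nat.card_pos).symm
  have h := (MulAction.stabilizer (Perm α) a).card_mul_index
  rw [MulAction.index_stabilizer_of_transitive, Nat.card_perm, hα, Nat.factorial_succ,
    mul_comm] at h
  exact Nat.eq_of_mul_eq_mul_left (Nat.succ_pos _) h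

open Fin.NatCast in
theorem finRotate_pow (n j : ℕ) [NeZero n] : finRotate n ^ j = Equiv.addRight (j : Fin n) := by
  induction j with
  | zero => ext; simp
  | succ j ih =>
    refine Equiv.ext fun i => ?_
    rw [pow_succ', Perm.mul_apply, ih, finRotate_apply, coe_addRight, coe_addRight, Nat.cast_succ,
      add_assoc]

theorem exists_eq_finRotate_pow_iff {n : ℕ} [NeZero n] (σ : Perm (Fin n)) :
    (∃ j : ℕ, σ = finRotate n ^ j) ↔ ∃ k : Fin n, σ = Equiv.addRight k := by
  simp_rw [finRotate_pow]
  exact ⟨fun ⟨j, h⟩ => ⟨_, h⟩, fun ⟨k, h⟩ => ⟨k, by rwa [Fin.cast_val_eq_self]⟩⟩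

/-- The points of the orbit of `[v] ∈ ℙ(K^ι)` under coordinate permutations, each represented
by the vector `w` with `w L = 1`. -/
def normalizedPermOrbit {ι K : Type*} [MonoidWithZero K] (v : ι → K) (L : ι) : Set (ι → K) :=
  {w | w L = 1 ∧ ∃ σ : Perm ι, ∃ c : K, c ≠ 0 ∧ ∀ i, w i = c * v (σ i)}

theorem normalizedPermOrbit_mul_right {ι K : Type*} [CommMonoidWithZero K] {u : K}
    (hu : IsUnit u) (v : ι → K) (L : ι) :
    normalizedPermOrbit (fun i => v i * u) L = normalizedPermOrbit v L := by
  ext w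
  refine and_congr_right fun _ => exists_congr fun σ => ⟨?_, ?_⟩
  · rintro ⟨c, hc, hw⟩
    refine ⟨c * u, (hu.mul_left_eq_zero).not.mpr hc, fun i => ?_⟩
    rw [hw, mul_assoc, mul_comm u]
  · rintro ⟨c, hc, hw⟩
    refine ⟨c * ↑hu.unit⁻¹, (hu.unit⁻¹.isUnit.mul_left_eq_zero).not.mpr hc, fun i => ?_⟩
    dsimp only
    rw [hw, mul_comm (v _) u, ← mul_assoc, mul_assoc c, hu.val_inv_mul, mul_one]

namespace AddChar

def finChar {M : Type*} [CommMonoid M] (n : ℕ) [NeZero n] {ζ : M} (hζ : ζ ^ n = 1) :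
    AddChar (Fin n) M where
  toFun a := ζ ^ (a : ℕ)
  map_zero_eq_one' := pow_zero ζ
  map_add_eq_mul' a b := by rw [Fin.val_add, ← pow_eq_pow_mod _ hζ, pow_add]

@[simp]
theorem finChar_apply {M : Type*} [CommMonoid M] {n : ℕ} [NeZero n] {ζ : M} (hζ : ζ ^ n = 1)
    (a : Fin n) : finChar n hζ a = ζ ^ (a : ℕ) :=
  rfl

theorem finChar_injective {M : Type*} [CommMonoid M] {n : ℕ} [NeZero n] {ζ : M}
    (hζ : IsPrimitiveRoot ζ n) : Injective (finChar n hζ.pow_eq_one) :=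
  fun a b h => Fin.ext (hζ.pow_inj a.isLt b.isLt h)

variable {G M : Type*} [AddCommGroup G] [CommMonoidWithZero M] [Nontrivial M] {ψ : AddChar G M}

theorem exists_ne_zero_apply_perm_eq_mul_iff (hψ : Injective ψ) (σ : Perm G) :
    (∃ c : M, c ≠ 0 ∧ ∀ i, ψ (σ i) = c * ψ i) ↔ ∃ k, σ = Equiv.addRight k := by
  constructor
  · rintro ⟨c, -, hc⟩
    have hc0 : c = ψ (σ 0) := by simpa using (hc 0).symm
    refine ⟨σ 0, Equiv.ext fun i => hψ ?_⟩
    rw [hc i, hc0, coe_addRight, map_add_eq_mul, mul_comm]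
  · rintro ⟨k, rfl⟩
    exact ⟨ψ k, (ψ.val_isUnit k).ne_zero, fun i => by
      rw [coe_addRight, map_add_eq_mul, mul_comm]⟩

theorem natCard_normalizedPermOrbit [Finite G] (hψ : Injective ψ) (L : G) :
    Nat.card (normalizedPermOrbit ψ L) = (Nat.card G - 1)! := by
  rw [← Perm.natCard_stabilizer L]
  have hmem (σ : MulAction.stabilizer (Perm G) L) :
      (fun i => ψ (σ.1 i - L)) ∈ normalizedPermOrbit ψ L := by
    have hσL : σ.1 L = L := σ.2
    refine ⟨by simp [hσL], σ, ψ (-L), (ψ.val_isUnit _).ne_zero, fun i => ?_⟩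
    dsimp only
    rw [sub_eq_add_neg, map_add_eq_mul, mul_comm]
  refine (Nat.card_eq_of_bijective (fun σ => ⟨_, hmem σ⟩) ⟨?_, ?_⟩).symm
  · rintro ⟨σ, _⟩ ⟨τ, _⟩ h
    ext i
    simpa using hψ (congrFun (congrArg Subtype.val h) i)
  · rintro ⟨w, hwL, σ, c, -, hw⟩
    have hc : c = ψ (-σ L) := left_inv_eq_right_inv (hwL ▸ hw L).symm
      (by rw [← map_add_eq_mul, add_neg_cancel, map_zero_eq_one])
    refine ⟨⟨σ.trans (Equiv.addRight (L - σ L)), by simp [MulAction.mem_stabilizer_iff]⟩,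
      Subtype.ext (funext fun i => ?_)⟩
    show ψ (σ i + (L - σ L) - L) = w i
    rw [hw, hc, ← map_add_eq_mul]
    congr 1
    abel

end AddChar

/-- The stabilizer in Sym_m of the projective point P_ω = (ω : ω² : ⋯ : ω^m)
(ω a primitive m-th root of unity) under coordinate permutation is the cyclic
group of order m generated by the m-cycle; hence the Sym_m-orbit of P_ω
(points normalized so that the last coordinate is 1) has length (m-1)!. -/
theorem stmt17 {K : Type*} [Field K] (m : ℕ) (hm : 5 ≤ m)
    (ω : K) (hω : IsPrimitiveRoot ω m) :
    (∀ σ : Equiv.Perm (Fin m),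
      (∃ c : K, c ≠ 0 ∧ ∀ i : Fin m, ω ^ ((σ i : ℕ) + 1) = c * ω ^ ((i : ℕ) + 1)) ↔
        ∃ j : ℕ, σ = (finRotate m) ^ j) ∧
    Nat.card {w : Fin m → K // w ⟨m - 1, by omega⟩ = 1 ∧
        ∃ σ : Equiv.Perm (Fin m), ∃ c : K, c ≠ 0 ∧
          ∀ i : Fin m, w i = c * ω ^ ((σ i : ℕ) + 1)} =
      Nat.factorial (m - 1) := by
  have : NeZero m := ⟨by omega⟩
  have hψ := AddChar.finChar_injective hω
  have hωu := hω.isUnit (NeZero.ne m)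
  refine ⟨fun σ => ?_, ?_⟩
  · rw [exists_eq_finRotate_pow_iff, ← AddChar.exists_ne_zero_apply_perm_eq_mul_iff hψ]
    simp_rw [pow_succ, ← mul_assoc, hωu.mul_left_inj, AddChar.finChar_apply]
  · have h := AddChar.natCard_normalizedPermOrbit hψ ⟨m - 1, by omega⟩
    rw [← normalizedPermOrbit_mul_right hωu, Nat.card_fin] at h
    simpa only [normalizedPermOrbit, AddChar.finChar_apply, ← pow_succ, Set.coe_ofPred] using h
end
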